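/- For every n ∈ {0,…,N} and every x ∈ ℂ with x ∉ {0, i/2, -i/2}, the odd-case monic para-Racah polynomials satisfy the difference equation -n(N-n)·P_n(x²) = D⁺(x)·P_n((x+i)²) - (D⁺(x) + D(x))·P_n(x²) + D(x)·P_n((x-i)²), where D(x) = (a+ix)(-a-j+ix)(c+ix)(-c-j+ix)/((2ix)(2ix+1)) and D⁺(x) = (a-ix)(-a-j-ix)(c-ix)(-c-j-ix)/((-2ix)(-2ix+1)). -/
import Mathlib


open Filter Topology Polynomial

set_option maxHeartbeats 1000000
noncomputable section

/-- The recurrence coefficient `bₙ` of the para-Racah polynomials, odd case `N = 2j+1`. -/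
def bOdd (j : ℕ) (a c α : ℝ) (n : ℕ) : ℝ :=
  if n = j then
    -a ^ 2 - (j : ℝ) * (1 + a - c) * (1 + a + c + j) / 2 + α * (a - c) * (1 + (j : ℝ)) * (a + c + j)
  else if n = j + 1 then
    -a ^ 2 - (j : ℝ) * (1 + a - c) * (1 + a + c + j) / 2
      + (1 - α) * (a - c) * (1 + (j : ℝ)) * (a + c + j)
  else
    -(a * (a + j) + c * (c + j) + (n : ℝ) * ((2 * (j : ℝ) + 1) - n)) / 2

/-- The recurrence coefficient `uₙ` of the para-Racah polynomials, odd case `N = 2j+1`. -/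
def uOdd (j : ℕ) (a c α : ℝ) (n : ℕ) : ℝ :=
  if n = j + 1 then
    α * (1 - α) * (a - c) ^ 2 * (1 + (j : ℝ)) ^ 2 * (a + c + j) ^ 2
  else
    (n : ℝ) * ((2 * (j : ℝ) + 1) + 1 - n) * ((2 * (j : ℝ) + 1) - n + a + c) * ((n : ℝ) - 1 + a + c)
        * (((n : ℝ) - j - 1) ^ 2 - (a - c) ^ 2) /
      (4 * ((2 * (j : ℝ) + 1) - 2 * n) * ((2 * (j : ℝ) + 1) - 2 * n + 2))

/-- Monic orthogonal polynomial sequence from a three-term recurrence: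
`monicOPS b u n = (P_{n-1}, P_n)` with `P₋₁ = 0`, `P₀ = 1`,
`P_{n+1}(y) = (y - bₙ) Pₙ(y) - uₙ P_{n-1}(y)`. -/
def monicOPS (b u : ℕ → ℝ) : ℕ → Polynomial ℝ × Polynomial ℝ
  | 0 => (0, 1)
  | n + 1 =>
    ((monicOPS b u n).2,
      (X - C (b n)) * (monicOPS b u n).2 - C (u n) * (monicOPS b u n).1)

/-- The monic para-Racah polynomial `Pₙ`, odd case `N = 2j+1`. -/
def paraRacahOdd (j : ℕ) (a c α : ℝ) (n : ℕ) : Polynomial ℝ :=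
  (monicOPS (bOdd j a c α) (uOdd j a c α) n).2


/-- `𝒟(x)` for the odd-case para-Racah difference equation. -/
def Dodd (j : ℕ) (a c : ℝ) (x : ℂ) : ℂ :=
  ((a : ℂ) + Complex.I * x) * (-(a : ℂ) - (j : ℂ) + Complex.I * x) * ((c : ℂ) + Complex.I * x)
      * (-(c : ℂ) - (j : ℂ) + Complex.I * x) /
    ((2 * Complex.I * x) * (2 * Complex.I * x + 1))

/-- `𝒟⁺(x) = conj 𝒟(x̄)`, the coefficient of the forward shift. -/
def DoddBar (j : ℕ) (a c : ℝ) (x : ℂ) : ℂ :=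
  ((a : ℂ) - Complex.I * x) * (-(a : ℂ) - (j : ℂ) - Complex.I * x) * ((c : ℂ) - Complex.I * x)
      * (-(c : ℂ) - (j : ℂ) - Complex.I * x) /
    ((-2 * Complex.I * x) * (-2 * Complex.I * x + 1))

namespace PRaux

variable (j : ℕ) (a c α : ℝ)

def prQ (n : ℕ) : Polynomial ℝ := (monicOPS (bOdd j a c α) (uOdd j a c α) n).1

lemma pr_zero (z : ℂ) : aeval z (paraRacahOdd j a c α 0) = 1 := by
  simp [paraRacahOdd, monicOPS]

lemma prQ_zero (z : ℂ) : aeval z (prQ j a c α 0) = 0 := by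
  simp [prQ, monicOPS]

lemma prQ_succ (n : ℕ) (z : ℂ) :
    aeval z (prQ j a c α (n+1)) = aeval z (paraRacahOdd j a c α n) := rfl

lemma pr_succ (n : ℕ) (z : ℂ) :
    aeval z (paraRacahOdd j a c α (n+1))
      = (z - (bOdd j a c α n : ℂ)) * aeval z (paraRacahOdd j a c α n)
        - (uOdd j a c α n : ℂ) * aeval z (prQ j a c α n) := by
  simp [paraRacahOdd, prQ, monicOPS]

lemma oddNe (m : ℕ) : (2 * (j : ℂ) + 1) - 2 * (m : ℂ) ≠ 0 := by
  intro h
  have h2 : ((2*j+1 : ℕ) : ℂ) = ((2*m : ℕ) : ℂ) := by push_cast; linear_combination h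
  have h3 : 2*j+1 = 2*m := Nat.cast_injective h2
  omega

lemma oddNe2 (m : ℕ) : (2 * (j : ℂ) + 1) - 2 * (m : ℂ) + 2 ≠ 0 := by
  intro h
  apply oddNe (j+1) m
  push_cast at h ⊢
  linear_combination h

lemma bCj (n : ℕ) (h : n = j) :
    ((bOdd j a c α n : ℝ) : ℂ)
      = -(a:ℂ)^2 - (j:ℂ) * (1 + (a:ℂ) - (c:ℂ)) * (1 + (a:ℂ) + (c:ℂ) + (j:ℂ)) / 2
        + (α:ℂ) * ((a:ℂ) - (c:ℂ)) * (1 + (j:ℂ)) * ((a:ℂ) + (c:ℂ) + (j:ℂ)) := by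
  subst h; simp [bOdd]

lemma bCj1 (n : ℕ) (h : n = j + 1) :
    ((bOdd j a c α n : ℝ) : ℂ)
      = -(a:ℂ)^2 - (j:ℂ) * (1 + (a:ℂ) - (c:ℂ)) * (1 + (a:ℂ) + (c:ℂ) + (j:ℂ)) / 2
        + (1 - (α:ℂ)) * ((a:ℂ) - (c:ℂ)) * (1 + (j:ℂ)) * ((a:ℂ) + (c:ℂ) + (j:ℂ)) := by
  subst h; simp [bOdd]

lemma bC (n : ℕ) (h1 : n ≠ j) (h2 : n ≠ j + 1) :
    ((bOdd j a c α n : ℝ) : ℂ)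
      = -((a:ℂ) * ((a:ℂ) + (j:ℂ)) + (c:ℂ) * ((c:ℂ) + (j:ℂ))
          + (n:ℂ) * ((2 * (j:ℂ) + 1) - (n:ℂ))) / 2 := by
  simp [bOdd, h1, h2]

lemma uCj1 (n : ℕ) (h : n = j + 1) :
    ((uOdd j a c α n : ℝ) : ℂ)
      = (α:ℂ) * (1 - (α:ℂ)) * ((a:ℂ) - (c:ℂ))^2 * (1 + (j:ℂ))^2
          * ((a:ℂ) + (c:ℂ) + (j:ℂ))^2 := by
  subst h; simp [uOdd]

lemma uC (n : ℕ) (h : n ≠ j + 1) :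
    ((uOdd j a c α n : ℝ) : ℂ)
      = (n:ℂ) * ((2 * (j:ℂ) + 1) + 1 - (n:ℂ)) * ((2 * (j:ℂ) + 1) - (n:ℂ) + (a:ℂ) + (c:ℂ))
          * ((n:ℂ) - 1 + (a:ℂ) + (c:ℂ)) * (((n:ℂ) - (j:ℂ) - 1)^2 - ((a:ℂ) - (c:ℂ))^2)
        / (4 * ((2 * (j:ℂ) + 1) - 2 * (n:ℂ)) * ((2 * (j:ℂ) + 1) - 2 * (n:ℂ) + 2)) := by
  simp [uOdd, h]


lemma S2lem (m : ℕ) (y : ℂ) :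
    (4*(j:ℂ) - 4*(m:ℂ) - 2) * (y - ((bOdd j a c α (m+1) : ℝ) : ℂ) - 2)
      - (2*(j:ℂ) - 2*(m:ℂ) + 2) * (y - ((bOdd j a c α m : ℝ) : ℂ))
    = (2*(j:ℂ) - 2*(m:ℂ) - 4) * (y - ((bOdd j a c α (m+2) : ℝ) : ℂ)) := by
  by_cases h1 : m = j
  · subst h1
    rw [bCj m a c α m rfl, bCj1 m a c α (m+1) rfl, bC m a c α (m+2) (by omega) (by omega)]
    push_cast; ring
  · by_cases h2 : m = j + 1
    · subst h2
      rw [bCj1 j a c α (j+1) rfl, bC j a c α (j+1+1) (by omega) (by omega),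
        bC j a c α (j+1+2) (by omega) (by omega)]
      push_cast; ring
    · by_cases h3 : m + 1 = j
      · subst h3
        rw [bCj (m+1) a c α (m+1) rfl, bCj1 (m+1) a c α (m+2) (by omega),
          bC (m+1) a c α m (by omega) (by omega)]
        push_cast; ring
      · by_cases h4 : m + 2 = j
        · subst h4
          rw [bCj (m+2) a c α (m+2) rfl, bC (m+2) a c α m (by omega) (by omega),
            bC (m+2) a c α (m+1) (by omega) (by omega)]
          push_cast; ring
        · rw [bC j a c α m (by omega) (by omega), bC j a c α (m+1) (by omega) (by omega),
            bC j a c α (m+2) (by omega) (by omega)]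
          push_cast; ring

lemma S1lem (m : ℕ) (y : ℂ) :
    -(2*(j:ℂ) - 2*(m:ℂ) - 2) * (y - ((bOdd j a c α (m+1) : ℝ) : ℂ) - 2)
        * (y - ((bOdd j a c α (m+1) : ℝ) : ℂ))
      + ((2*(j:ℂ) - 2*(m:ℂ)) + (2*(j:ℂ) - 2*(m:ℂ) + 2)) * ((uOdd j a c α (m+1) : ℝ) : ℂ)
      - (1 + 4*y) * (-((m:ℂ) + 1) * (2*(j:ℂ) - (m:ℂ)))
      - (-2 * (y^2
          - ((j:ℂ)^2 + (j:ℂ) - ((a:ℂ) * ((a:ℂ) + (j:ℂ)) + (c:ℂ) * ((c:ℂ) + (j:ℂ)))) * y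
          + ((a:ℂ)^2 + (a:ℂ) * (j:ℂ)) * ((c:ℂ)^2 + (c:ℂ) * (j:ℂ))
          - ((a:ℂ) * ((a:ℂ) + (j:ℂ)) + (c:ℂ) * ((c:ℂ) + (j:ℂ))) * (j:ℂ) / 2))
    = -(2*(j:ℂ) - 2*(m:ℂ) - 4) * (y - ((bOdd j a c α (m+2) : ℝ) : ℂ))
          * (y - ((bOdd j a c α (m+1) : ℝ) : ℂ))
      + 2 * (2*(j:ℂ) - 2*(m:ℂ) - 3) * ((uOdd j a c α (m+2) : ℝ) : ℂ) := by
  by_cases h1 : m = j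
  · -- u(m+1) special, u(m+2) generic
    subst h1
    have hd1 : ((2*(m:ℂ)+1) - 2*((m+2:ℕ):ℂ)) ≠ 0 := oddNe m (m+2)
    have hd2 : ((2*(m:ℂ)+1) - 2*((m+2:ℕ):ℂ) + 2) ≠ 0 := oddNe2 m (m+2)
    have hd : (4 * ((2*(m:ℂ)+1) - 2*((m+2:ℕ):ℂ)) * ((2*(m:ℂ)+1) - 2*((m+2:ℕ):ℂ) + 2)) ≠ 0 :=
      mul_ne_zero (mul_ne_zero (by norm_num) hd1) hd2
    have hu2 := uC m a c α (m+2) (by omega)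
    rw [eq_div_iff hd] at hu2
    rw [bCj1 m a c α (m+1) rfl, bC m a c α (m+2) (by omega) (by omega),
      uCj1 m a c α (m+1) rfl]
    apply mul_left_cancel₀ hd
    push_cast at hu2 ⊢
    linear_combination (-2 * (2*(m:ℂ) - 2*(m:ℂ) - 3)) * hu2
  · by_cases h2 : m + 1 = j
    · -- u(m+2) special, u(m+1) generic
      subst h2
      have hd1 : ((2*((m+1:ℕ):ℂ)+1) - 2*((m+1:ℕ):ℂ)) ≠ 0 := oddNe (m+1) (m+1)
      have hd2 : ((2*((m+1:ℕ):ℂ)+1) - 2*((m+1:ℕ):ℂ) + 2) ≠ 0 := oddNe2 (m+1) (m+1)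
      have hd : (4 * ((2*((m+1:ℕ):ℂ)+1) - 2*((m+1:ℕ):ℂ)) * ((2*((m+1:ℕ):ℂ)+1) - 2*((m+1:ℕ):ℂ) + 2)) ≠ 0 :=
        mul_ne_zero (mul_ne_zero (by norm_num) hd1) hd2
      have hu1 := uC (m+1) a c α (m+1) (by omega)
      rw [eq_div_iff hd] at hu1
      rw [bCj (m+1) a c α (m+1) rfl, bCj1 (m+1) a c α (m+2) (by omega),
        uCj1 (m+1) a c α (m+2) (by omega)]
      apply mul_left_cancel₀ hd
      push_cast at hu1 ⊢
      linear_combination ((2*((m:ℂ)+1) - 2*(m:ℂ)) + (2*((m:ℂ)+1) - 2*(m:ℂ) + 2)) * hu1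
    · by_cases h3 : m + 2 = j
      · -- both generic, j = m+2
        subst h3
        have hd1 : ((2*((m+2:ℕ):ℂ)+1) - 2*((m+1:ℕ):ℂ)) ≠ 0 := oddNe (m+2) (m+1)
        have hd2 : ((2*((m+2:ℕ):ℂ)+1) - 2*((m+1:ℕ):ℂ) + 2) ≠ 0 := oddNe2 (m+2) (m+1)
        have hd3 : ((2*((m+2:ℕ):ℂ)+1) - 2*((m+2:ℕ):ℂ)) ≠ 0 := oddNe (m+2) (m+2)
        have hd4 : ((2*((m+2:ℕ):ℂ)+1) - 2*((m+2:ℕ):ℂ) + 2) ≠ 0 := oddNe2 (m+2) (m+2)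
        have hdA : (4 * ((2*((m+2:ℕ):ℂ)+1) - 2*((m+1:ℕ):ℂ)) * ((2*((m+2:ℕ):ℂ)+1) - 2*((m+1:ℕ):ℂ) + 2)) ≠ 0 :=
          mul_ne_zero (mul_ne_zero (by norm_num) hd1) hd2
        have hdB : (4 * ((2*((m+2:ℕ):ℂ)+1) - 2*((m+2:ℕ):ℂ)) * ((2*((m+2:ℕ):ℂ)+1) - 2*((m+2:ℕ):ℂ) + 2)) ≠ 0 :=
          mul_ne_zero (mul_ne_zero (by norm_num) hd3) hd4
        have hu1 := uC (m+2) a c α (m+1) (by omega)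
        have hu2 := uC (m+2) a c α (m+2) (by omega)
        rw [eq_div_iff hdA] at hu1
        rw [eq_div_iff hdB] at hu2
        rw [bC (m+2) a c α (m+1) (by omega) (by omega), bCj (m+2) a c α (m+2) rfl]
        apply mul_left_cancel₀ (mul_ne_zero hdA hdB)
        push_cast at hu1 hu2 ⊢
        linear_combination
          (((2*((m:ℂ)+2) - 2*(m:ℂ)) + (2*((m:ℂ)+2) - 2*(m:ℂ) + 2))
              * (4 * ((2*((m:ℂ)+2)+1) - 2*((m:ℂ)+2)) * ((2*((m:ℂ)+2)+1) - 2*((m:ℂ)+2) + 2))) * hu1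
          - (2 * (2*((m:ℂ)+2) - 2*(m:ℂ) - 3)
              * (4 * ((2*((m:ℂ)+2)+1) - 2*((m:ℂ)+1)) * ((2*((m:ℂ)+2)+1) - 2*((m:ℂ)+1) + 2))) * hu2
      · -- fully generic
        have hd1 : ((2*(j:ℂ)+1) - 2*((m+1:ℕ):ℂ)) ≠ 0 := oddNe j (m+1)
        have hd2 : ((2*(j:ℂ)+1) - 2*((m+1:ℕ):ℂ) + 2) ≠ 0 := oddNe2 j (m+1)
        have hd3 : ((2*(j:ℂ)+1) - 2*((m+2:ℕ):ℂ)) ≠ 0 := oddNe j (m+2)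
        have hd4 : ((2*(j:ℂ)+1) - 2*((m+2:ℕ):ℂ) + 2) ≠ 0 := oddNe2 j (m+2)
        have hdA : (4 * ((2*(j:ℂ)+1) - 2*((m+1:ℕ):ℂ)) * ((2*(j:ℂ)+1) - 2*((m+1:ℕ):ℂ) + 2)) ≠ 0 :=
          mul_ne_zero (mul_ne_zero (by norm_num) hd1) hd2
        have hdB : (4 * ((2*(j:ℂ)+1) - 2*((m+2:ℕ):ℂ)) * ((2*(j:ℂ)+1) - 2*((m+2:ℕ):ℂ) + 2)) ≠ 0 :=
          mul_ne_zero (mul_ne_zero (by norm_num) hd3) hd4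
        have hu1 := uC j a c α (m+1) (by omega)
        have hu2 := uC j a c α (m+2) (by omega)
        rw [eq_div_iff hdA] at hu1
        rw [eq_div_iff hdB] at hu2
        rw [bC j a c α (m+1) (by omega) (by omega), bC j a c α (m+2) (by omega) (by omega)]
        apply mul_left_cancel₀ (mul_ne_zero hdA hdB)
        push_cast at hu1 hu2 ⊢
        linear_combination
          (((2*(j:ℂ) - 2*(m:ℂ)) + (2*(j:ℂ) - 2*(m:ℂ) + 2))
              * (4 * ((2*(j:ℂ)+1) - 2*((m:ℂ)+2)) * ((2*(j:ℂ)+1) - 2*((m:ℂ)+2) + 2))) * hu1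
          - (2 * (2*(j:ℂ) - 2*(m:ℂ) - 3)
              * (4 * ((2*(j:ℂ)+1) - 2*((m:ℂ)+1)) * ((2*(j:ℂ)+1) - 2*((m:ℂ)+1) + 2))) * hu2


def DvC (j : ℕ) (a c : ℝ) (v : ℂ) : ℂ :=
  ((a:ℂ) + v) * (-(a:ℂ) - (j:ℂ) + v) * ((c:ℂ) + v) * (-(c:ℂ) - (j:ℂ) + v)
    / ((2 * v) * (2 * v + 1))

def DvbC (j : ℕ) (a c : ℝ) (v : ℂ) : ℂ :=
  ((a:ℂ) - v) * (-(a:ℂ) - (j:ℂ) - v) * ((c:ℂ) - v) * (-(c:ℂ) - (j:ℂ) - v)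
    / ((-2 * v) * (-2 * v + 1))

lemma Wlem (v : ℂ) (h0 : v ≠ 0) (hp : 2 * v + 1 ≠ 0) (hm : 2 * v - 1 ≠ 0) :
    (1 + 4 * (-v^2)) * (DvbC j a c v + DvC j a c v)
      = -2 * ((-v^2)^2
          - ((j:ℂ)^2 + (j:ℂ) - ((a:ℂ) * ((a:ℂ) + (j:ℂ)) + (c:ℂ) * ((c:ℂ) + (j:ℂ)))) * (-v^2)
          + ((a:ℂ)^2 + (a:ℂ) * (j:ℂ)) * ((c:ℂ)^2 + (c:ℂ) * (j:ℂ))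
          - ((a:ℂ) * ((a:ℂ) + (j:ℂ)) + (c:ℂ) * ((c:ℂ) + (j:ℂ))) * (j:ℂ) / 2) := by
  have hm' : (-2 * v) * (-2 * v + 1) ≠ 0 := by
    apply mul_ne_zero
    · simpa using h0
    · intro h; apply hm; linear_combination -h
  have hp' : (2 * v) * (2 * v + 1) ≠ 0 := by
    apply mul_ne_zero
    · simpa using h0
    · exact hp
  rw [DvC, DvbC, div_add_div _ _ hm' hp', ← mul_div_assoc, div_eq_iff (mul_ne_zero hm' hp')]
  ring

lemma DvMul (v : ℂ) (hp' : (2 * v) * (2 * v + 1) ≠ 0) :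
    DvC j a c v * ((2 * v) * (2 * v + 1))
      = ((a:ℂ) + v) * (-(a:ℂ) - (j:ℂ) + v) * ((c:ℂ) + v) * (-(c:ℂ) - (j:ℂ) + v) := by
  rw [DvC]; exact div_mul_cancel₀ _ hp'

lemma DvbMul (v : ℂ) (hm' : (-2 * v) * (-2 * v + 1) ≠ 0) :
    DvbC j a c v * ((-2 * v) * (-2 * v + 1))
      = ((a:ℂ) - v) * (-(a:ℂ) - (j:ℂ) - v) * ((c:ℂ) - v) * (-(c:ℂ) - (j:ℂ) - v) := by
  rw [DvbC]; exact div_mul_cancel₀ _ hm'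

def StA (n : ℕ) : Prop := ∀ v : ℂ, v ≠ 0 → 2 * v + 1 ≠ 0 → 2 * v - 1 ≠ 0 →
  -(n:ℂ) * ((2 * (j:ℂ) + 1) - (n:ℂ)) * aeval (-v^2 : ℂ) (paraRacahOdd j a c α n)
    = DvbC j a c v * aeval (-(v-1)^2 : ℂ) (paraRacahOdd j a c α n)
      - (DvbC j a c v + DvC j a c v) * aeval (-v^2 : ℂ) (paraRacahOdd j a c α n)
      + DvC j a c v * aeval (-(v+1)^2 : ℂ) (paraRacahOdd j a c α n)

def StB (n : ℕ) : Prop := ∀ v : ℂ, v ≠ 0 → 2 * v + 1 ≠ 0 → 2 * v - 1 ≠ 0 →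
  (2 * v - 1) * DvbC j a c v * aeval (-(v-1)^2 : ℂ) (paraRacahOdd j a c α n)
    - (2 * v + 1) * DvC j a c v * aeval (-(v+1)^2 : ℂ) (paraRacahOdd j a c α n)
  = -((2 * (j:ℂ) + 1) - 2 * (n:ℂ) - 1) * aeval (-v^2 : ℂ) (paraRacahOdd j a c α (n+1))
    + ((2 * (j:ℂ) + 1) - 2 * (n:ℂ) + 1) * ((uOdd j a c α n : ℝ) : ℂ)
        * aeval (-v^2 : ℂ) (prQ j a c α n)

lemma B0 : StB j a c α 0 := by
  intro v h0 hp hm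
  have hm' : (-2 * v) * (-2 * v + 1) ≠ 0 := by
    apply mul_ne_zero
    · simpa using h0
    · intro h; apply hm; linear_combination -h
  have hp' : (2 * v) * (2 * v + 1) ≠ 0 := mul_ne_zero (by simpa using h0) hp
  have hDv := DvMul j a c v hp'
  have hDvb := DvbMul j a c v hm'
  simp only [pr_succ, prQ_succ, pr_zero, prQ_zero]
  by_cases hj : j = 0
  · subst hj
    rw [bCj 0 a c α 0 rfl]
    apply mul_left_cancel₀ (mul_ne_zero hm' hp')
    push_cast at hDv hDvb ⊢
    linear_combination ((2*v-1) * ((2*v)*(2*v+1))) * hDvb - ((2*v+1) * ((-2*v)*(-2*v+1))) * hDv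
  · rw [bC j a c α 0 (by omega) (by omega)]
    apply mul_left_cancel₀ (mul_ne_zero hm' hp')
    push_cast at hDv hDvb ⊢
    linear_combination ((2*v-1) * ((2*v)*(2*v+1))) * hDvb - ((2*v+1) * ((-2*v)*(-2*v+1))) * hDv

lemma B1 : StB j a c α 1 := by
  intro v h0 hp hm
  have hm' : (-2 * v) * (-2 * v + 1) ≠ 0 := by
    apply mul_ne_zero
    · simpa using h0
    · intro h; apply hm; linear_combination -h
  have hp' : (2 * v) * (2 * v + 1) ≠ 0 := mul_ne_zero (by simpa using h0) hp
  have hDv := DvMul j a c v hp'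
  have hDvb := DvbMul j a c v hm'
  simp only [pr_succ, prQ_succ, pr_zero, prQ_zero]
  by_cases hj0 : j = 0
  · subst hj0
    rw [bCj 0 a c α 0 rfl, bCj1 0 a c α 1 rfl, uCj1 0 a c α 1 rfl]
    apply mul_left_cancel₀ (mul_ne_zero hm' hp')
    push_cast at hDv hDvb ⊢
    linear_combination ((2*v-1) * ((2*v)*(2*v+1)) * ((-(v-1)^2:ℂ)
          - (-(a:ℂ)^2 - (0:ℂ) * (1 + (a:ℂ) - (c:ℂ)) * (1 + (a:ℂ) + (c:ℂ) + (0:ℂ)) / 2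
            + (α:ℂ) * ((a:ℂ) - (c:ℂ)) * (1 + (0:ℂ)) * ((a:ℂ) + (c:ℂ) + (0:ℂ))))) * hDvb
      - ((2*v+1) * ((-2*v)*(-2*v+1)) * ((-(v+1)^2:ℂ)
          - (-(a:ℂ)^2 - (0:ℂ) * (1 + (a:ℂ) - (c:ℂ)) * (1 + (a:ℂ) + (c:ℂ) + (0:ℂ)) / 2
            + (α:ℂ) * ((a:ℂ) - (c:ℂ)) * (1 + (0:ℂ)) * ((a:ℂ) + (c:ℂ) + (0:ℂ))))) * hDv
  · have hd1 : ((2*(j:ℂ)+1) - 2*((1:ℕ):ℂ)) ≠ 0 := oddNe j 1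
    have hd2 : ((2*(j:ℂ)+1) - 2*((1:ℕ):ℂ) + 2) ≠ 0 := oddNe2 j 1
    have hd : (4 * ((2*(j:ℂ)+1) - 2*((1:ℕ):ℂ)) * ((2*(j:ℂ)+1) - 2*((1:ℕ):ℂ) + 2)) ≠ 0 :=
      mul_ne_zero (mul_ne_zero (by norm_num) hd1) hd2
    have hu1 := uC j a c α 1 (by omega)
    rw [eq_div_iff hd] at hu1
    by_cases hj1 : j = 1
    · subst hj1
      rw [bC 1 a c α 0 (by omega) (by omega), bCj 1 a c α 1 rfl]
      apply mul_left_cancel₀ (mul_ne_zero (mul_ne_zero hm' hp') hd)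
      push_cast at hDv hDvb hu1 ⊢
      linear_combination
        ((2*v-1) * ((2*v)*(2*v+1)) * (4 * ((2*(1:ℂ)+1) - 2) * ((2*(1:ℂ)+1) - 2 + 2))
            * ((-(v-1)^2:ℂ) - (-(((a:ℝ):ℂ) * (((a:ℝ):ℂ) + 1) + ((c:ℝ):ℂ) * (((c:ℝ):ℂ) + 1)
              + 0 * ((2*(1:ℂ)+1) - 0)) / 2))) * hDvb
        - ((2*v+1) * ((-2*v)*(-2*v+1)) * (4 * ((2*(1:ℂ)+1) - 2) * ((2*(1:ℂ)+1) - 2 + 2))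
            * ((-(v+1)^2:ℂ) - (-(((a:ℝ):ℂ) * (((a:ℝ):ℂ) + 1) + ((c:ℝ):ℂ) * (((c:ℝ):ℂ) + 1)
              + 0 * ((2*(1:ℂ)+1) - 0)) / 2))) * hDv
        - ((4*(1:ℂ) - 2) * ((-2*v)*(-2*v+1)) * ((2*v)*(2*v+1))) * hu1
    · rw [bC j a c α 0 (by omega) (by omega), bC j a c α 1 (by omega) (by omega)]
      apply mul_left_cancel₀ (mul_ne_zero (mul_ne_zero hm' hp') hd)
      push_cast at hDv hDvb hu1 ⊢
      linear_combination
        ((2*v-1) * ((2*v)*(2*v+1)) * (4 * ((2*(j:ℂ)+1) - 2) * ((2*(j:ℂ)+1) - 2 + 2))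
            * ((-(v-1)^2:ℂ) - (-(((a:ℝ):ℂ) * (((a:ℝ):ℂ) + (j:ℂ)) + ((c:ℝ):ℂ) * (((c:ℝ):ℂ) + (j:ℂ))
              + 0 * ((2*(j:ℂ)+1) - 0)) / 2))) * hDvb
        - ((2*v+1) * ((-2*v)*(-2*v+1)) * (4 * ((2*(j:ℂ)+1) - 2) * ((2*(j:ℂ)+1) - 2 + 2))
            * ((-(v+1)^2:ℂ) - (-(((a:ℝ):ℂ) * (((a:ℝ):ℂ) + (j:ℂ)) + ((c:ℝ):ℂ) * (((c:ℝ):ℂ) + (j:ℂ))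
              + 0 * ((2*(j:ℂ)+1) - 0)) / 2))) * hDv
        - ((4*(j:ℂ) - 2) * ((-2*v)*(-2*v+1)) * ((2*v)*(2*v+1))) * hu1


lemma mainAB (n : ℕ) : StA j a c α n ∧ StB j a c α n := by
  induction n using Nat.strong_induction_on with
  | _ n ih =>
    match n with
    | 0 =>
      refine ⟨?_, B0 j a c α⟩
      intro v h0 hp hm
      simp only [pr_zero]
      push_cast
      ring
    | 1 =>
      refine ⟨?_, B1 j a c α⟩
      intro v h0 hp hm
      have hB0 := (ih 0 (by omega)).2 v h0 hp hm
      simp only [pr_succ, prQ_succ, pr_zero, prQ_zero] at hB0 ⊢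
      push_cast at hB0 ⊢
      linear_combination -hB0
    | (m+2) =>
      constructor
      · intro v h0 hp hm'
        have h1 := (ih (m+1) (by omega)).1 v h0 hp hm'
        have h2 := (ih m (by omega)).1 v h0 hp hm'
        have h3 := (ih (m+1) (by omega)).2 v h0 hp hm'
        simp only [pr_succ, prQ_succ, pr_zero, prQ_zero] at h1 h2 h3 ⊢
        push_cast at h1 h2 h3 ⊢
        linear_combination ((-v^2) - ((bOdd j a c α (m+1) : ℝ) : ℂ)) * h1
          - ((uOdd j a c α (m+1) : ℝ) : ℂ) * h2 - h3
      · intro v h0 hp hm'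
        have hA' := (ih (m+1) (by omega)).1 v h0 hp hm'
        have h1 := (ih (m+1) (by omega)).2 v h0 hp hm'
        have h2 := (ih m (by omega)).2 v h0 hp hm'
        have hW := Wlem j a c v h0 hp hm'
        have hS1 := S1lem j a c α m (-v^2)
        have hS2 := S2lem j a c α m (-v^2)
        simp only [pr_succ, prQ_succ, pr_zero, prQ_zero] at hA' h1 h2 ⊢
        push_cast at hA' h1 h2 hS1 hS2 hW ⊢
        linear_combination
          ((-v^2) - ((bOdd j a c α (m+1) : ℝ) : ℂ) - 2) * h1
          - ((uOdd j a c α (m+1) : ℝ) : ℂ) * h2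
          + (1 + 4*(-v^2)) * hA'
          - (((-v^2) - ((bOdd j a c α m : ℝ) : ℂ)) * aeval (-v^2 : ℂ) (paraRacahOdd j a c α m)
              - ((uOdd j a c α m : ℝ) : ℂ) * aeval (-v^2 : ℂ) (prQ j a c α m)) * hW
          + (((-v^2) - ((bOdd j a c α m : ℝ) : ℂ)) * aeval (-v^2 : ℂ) (paraRacahOdd j a c α m)
              - ((uOdd j a c α m : ℝ) : ℂ) * aeval (-v^2 : ℂ) (prQ j a c α m)) * hS1
          + ((uOdd j a c α (m+1) : ℝ) : ℂ) * (aeval (-v^2 : ℂ) (paraRacahOdd j a c α m)) * hS2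

end PRaux

theorem paraRacahOdd_difference_equation (j : ℕ) (a c α : ℝ) :
    ∀ n : ℕ, n ≤ 2 * j + 1 → ∀ x : ℂ, x ≠ 0 → x ≠ Complex.I / 2 → x ≠ -(Complex.I / 2) →
      -(n : ℂ) * ((2 * (j : ℂ) + 1) - n) * aeval (x ^ 2) (paraRacahOdd j a c α n) =
        DoddBar j a c x * aeval ((x + Complex.I) ^ 2) (paraRacahOdd j a c α n)
          - (DoddBar j a c x + Dodd j a c x) * aeval (x ^ 2) (paraRacahOdd j a c α n)
          + Dodd j a c x * aeval ((x - Complex.I) ^ 2) (paraRacahOdd j a c α n) := by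
  intro n hn x hx0 hxp hxm
  have hv0 : Complex.I * x ≠ 0 := mul_ne_zero Complex.I_ne_zero hx0
  have hvp : 2 * (Complex.I * x) + 1 ≠ 0 := by
    intro h; apply hxp
    linear_combination (-(Complex.I)/2) * h + x * Complex.I_mul_I
  have hvm : 2 * (Complex.I * x) - 1 ≠ 0 := by
    intro h; apply hxm
    linear_combination (-(Complex.I)/2) * h + x * Complex.I_mul_I
  have hA := (PRaux.mainAB j a c α n).1 (Complex.I * x) hv0 hvp hvm
  have hy : (-(Complex.I * x)^2 : ℂ) = x^2 := by
    linear_combination (-(x^2)) * Complex.I_mul_I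
  have hP : (-(Complex.I * x - 1)^2 : ℂ) = (x + Complex.I)^2 := by
    linear_combination (-(x^2) - 1) * Complex.I_mul_I
  have hM : (-(Complex.I * x + 1)^2 : ℂ) = (x - Complex.I)^2 := by
    linear_combination (-(x^2) - 1) * Complex.I_mul_I
  have hD : PRaux.DvC j a c (Complex.I * x) = Dodd j a c x := by
    rw [PRaux.DvC, Dodd]; ring_nf
  have hDb : PRaux.DvbC j a c (Complex.I * x) = DoddBar j a c x := by
    rw [PRaux.DvbC, DoddBar]; ring_nf
  rw [hy, hP, hM, hD, hDb] at hA
  exact hA
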